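/- arXiv:1703.04834 — 2 statements merged into one kernel-verified Lean document; each statement's English description precedes it below -/
import Mathlib

section
/- Let 𝒜 be a weak deterministic Büchi automaton over the alphabet Σ ∪ {⋆}, and let w = u⋆w' be an infinite word with u ∈ Σ^*, |u| a multiple of d, and w' ∈ Σ^ω. Then 𝒜 accepts w if and only if par(𝒜) accepts par(w). -/
/-- A deterministic Büchi automaton over alphabet `A` with states `Q`. -/
structure DBA (A : Type) (Q : Type) where
  delta : Q → A → Q
  init : Q
  F : Set Q

namespace DBA

variable {A Q : Type}

/-- The transition function extended to finite words. -/
def deltaStar (M : DBA A Q) : Q → List A → Q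
  | q, [] => q
  | q, a :: u => deltaStar M (M.delta q a) u

/-- The run of `M` on the infinite word `w`. -/
def run (M : DBA A Q) (w : ℕ → A) : ℕ → Q
  | 0 => M.init
  | n + 1 => M.delta (run M w n) (w n)

/-- `M` accepts `w` if some accepting state occurs infinitely often in the run. -/
def Accepts (M : DBA A Q) (w : ℕ → A) : Prop :=
  ∃ q ∈ M.F, ∀ N : ℕ, ∃ n, N ≤ n ∧ run M w n = q

/-- The ω-language of `M`. -/
def Lang (M : DBA A Q) : Set (ℕ → A) := {w | M.Accepts w}

/-- `M` with initial state changed to `q`. -/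
def start (M : DBA A Q) (q : Q) : DBA A Q := { M with init := q }

/-- `q'` is accessible from `q` (by a nonempty word). -/
def Reach (M : DBA A Q) (q q' : Q) : Prop :=
  ∃ u : List A, u ≠ [] ∧ deltaStar M q u = q'

/-- `M` is weak: `F` is a union of strongly connected components. -/
def Weak (M : DBA A Q) : Prop :=
  ∀ q ∈ M.F, ∀ q', M.Reach q q' → M.Reach q' q → q' ∈ M.F

/-- `M` is minimal: distinct states recognize distinct languages. -/
def Minimal (M : DBA A Q) : Prop :=
  ∀ q q' : Q, q ≠ q' → (M.start q).Lang ≠ (M.start q').Lang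

end DBA

/-- Concatenation of a finite word and an infinite word. -/
def cat {A : Type} (u : List A) (w : ℕ → A) : ℕ → A :=
  fun n => if h : n < u.length then u.get ⟨n, h⟩ else w (n - u.length)

/-- The value `⟨v⟩ = Σ_{i<|v|} v[i]·b^(|v|-1-i)` of a finite digit word. -/
noncomputable def natVal (b : ℕ) (v : List (Fin b)) : ℝ :=
  ∑ i : Fin v.length, ((v.get i : ℕ) : ℝ) * (b : ℝ) ^ (v.length - 1 - (i : ℕ))

/-- The fractional value `⟨w⟩_f = Σ_{i≥0} w[i]·b^(-i-1)` of an infinite digit word. -/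
noncomputable def fracVal (b : ℕ) (w : ℕ → Fin b) : ℝ :=
  ∑' i : ℕ, ((w i : ℕ) : ℝ) * (b : ℝ) ^ (-(i : ℤ) - 1)

/-- The word `𝐮⋆𝐰` over `Σ^d ∪ {⋆}`; `none` is the separator `⋆`. -/
def encWord {b d : ℕ} (u : List (Fin d → Fin b)) (w : ℕ → Fin d → Fin b) :
    ℕ → Option (Fin d → Fin b) :=
  cat (u.map some ++ [none]) (fun n => some (w n))

/-- The vector of reals encoded by `𝐮⋆𝐰`. -/
noncomputable def vecVal {b d : ℕ} (u : List (Fin d → Fin b)) (w : ℕ → Fin d → Fin b) :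
    Fin d → ℝ :=
  fun i => natVal b (u.map fun t => t i) + fracVal b (fun n => w n i)

/-- A language of words over `Σ^d ∪ {⋆}` is saturated if membership only depends on
the encoded vector of reals. -/
def Saturated {b d : ℕ} (L : Set (ℕ → Option (Fin d → Fin b))) : Prop :=
  ∀ (u : List (Fin d → Fin b)) (w : ℕ → Fin d → Fin b)
    (u' : List (Fin d → Fin b)) (w' : ℕ → Fin d → Fin b),
    vecVal u w = vecVal u' w' → encWord u w ∈ L → encWord u' w' ∈ L

/-- The parallelization `par(𝒜)` of an automaton over `Σ ∪ {⋆}`. -/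
def parDBA {Q : Type} {b : ℕ} (d : ℕ) (M : DBA (Option (Fin b)) Q) :
    DBA (Option (Fin d → Fin b)) Q where
  delta := fun q x =>
    match x with
    | none => M.delta q none
    | some t => M.deltaStar q (List.ofFn fun i => some (t i))
  init := M.init
  F := M.F

/-- Fill the `f`-th component of a tuple of `Σ^□_f` with the digit `z`. -/
def fixTuple {b d : ℕ} (f : Fin d) (z : Fin b) (t : {i : Fin d // i ≠ f} → Fin b) :
    Fin d → Fin b :=
  fun i => if h : i = f then z else t ⟨i, h⟩

/-- The automaton `𝒜^{z@f}` over `Σ^□_f ∪ {⋆}`; a letter of `Σ^□_f` is represented by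
its tuple of non-`f` components (the `f`-th component being `□`). -/
def fixDBA {Q : Type} {b d : ℕ} (M : DBA (Option (Fin d → Fin b)) Q) (f : Fin d) (z : Fin b) :
    DBA (Option ({i : Fin d // i ≠ f} → Fin b)) Q where
  delta := fun q x =>
    match x with
    | none => M.delta q none
    | some t => M.delta q (some (fixTuple f z t))
  init := M.init
  F := M.F

/-- `fix_{□@f}(𝐰)`: replace the `f`-th component of every non-`⋆` letter by `□`. -/
def eraseComp {b d : ℕ} (f : Fin d) (w : ℕ → Option (Fin d → Fin b)) :
    ℕ → Option ({i : Fin d // i ≠ f} → Fin b) :=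
  fun n => (w n).map fun t i => t i.val

/-- `fix_{z@f}(𝐰)`: replace the `f`-th component (`□`) of every non-`⋆` letter by `z`. -/
def fillComp {b d : ℕ} (f : Fin d) (z : Fin b) (w : ℕ → Option ({i : Fin d // i ≠ f} → Fin b)) :
    ℕ → Option (Fin d → Fin b) :=
  fun n => (w n).map (fixTuple f z)

/-- The automaton `𝒜^{seq z}`, over alphabet `Σ ∪ {□,⋆}` (here `none` is `⋆` and
`some none` is `□`), with states `(Q × {0,…,d−1}) ∪ {⊥}` (`none` is `⊥`). -/
def seqDBA {Q : Type} {b : ℕ} (d : ℕ) (hd : 0 < d) (M : DBA (Option (Fin b)) Q) (z : Fin b) :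
    DBA (Option (Option (Fin b))) (Option (Q × Fin d)) where
  delta := fun s x =>
    match s, x with
    | none, _ => none
    | some (q, i), none => some (M.delta q none, i)
    | some (q, i), some (some a) =>
        if h : (i : ℕ) + 1 < d then some (M.delta q (some a), ⟨(i : ℕ) + 1, h⟩) else none
    | some (q, i), some none =>
        if (i : ℕ) = d - 1 then some (M.delta q (some z), ⟨0, hd⟩) else none
  init := some (M.init, ⟨0, hd⟩)
  F := {s | ∃ q ∈ M.F, ∃ i : Fin d, s = some (q, i)}

/-- Auxiliary function for flattening an infinite word of blocks:
`flatAux blk v n` is the pair (block index, offset inside the block) of position `n`. -/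
def flatAux {A B : Type} (blk : A → List B) (v : ℕ → A) : ℕ → ℕ × ℕ
  | 0 => (0, 0)
  | n + 1 =>
      let p := flatAux blk v n
      if p.2 + 1 < (blk (v p.1)).length then (p.1, p.2 + 1) else (p.1 + 1, 0)

/-- Flattening of an infinite word of (nonempty) blocks. -/
def flatten {A B : Type} [Inhabited B] (blk : A → List B) (v : ℕ → A) : ℕ → B :=
  fun n => (blk (v (flatAux blk v n).1)).getD (flatAux blk v n).2 default

/-- The block of a letter of `Σ^d ∪ {⋆}`: a `d`-tuple becomes its list of components,
`⋆` stays a single letter. -/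
def parBlock {b d : ℕ} : Option (Fin d → Fin b) → List (Option (Fin b))
  | none => [none]
  | some t => List.ofFn fun i => some (t i)

/-- `seq(𝐯)`: the sequentialization of an infinite word over `Σ^d ∪ {⋆}`. -/
def seqWord {b d : ℕ} (v : ℕ → Option (Fin d → Fin b)) : ℕ → Option (Fin b) :=
  flatten parBlock v

/-- The block of a letter of `Σ^□_f ∪ {⋆}`, as a word over `Σ ∪ {□,⋆}`. -/
def sqBlock {b d : ℕ} (f : Fin d) :
    Option ({i : Fin d // i ≠ f} → Fin b) → List (Option (Option (Fin b)))
  | none => [none]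
  | some t => List.ofFn fun i : Fin d =>
      if h : i = f then some none else some (some (t ⟨i, h⟩))

/-- Number of non-`⋆` letters among the first `n` letters of `w`. -/
def digitCount {b : ℕ} (w : ℕ → Option (Fin b)) : ℕ → ℕ
  | 0 => 0
  | n + 1 => digitCount w n + (if w n = none then 0 else 1)

/-!
Reading `par(𝒜)` on `par(w)` is reading `𝒜` on `w` one block at a time, so the run of
`par(𝒜)` is the run of `𝒜` sampled at the block boundaries, a sequence of positions tending
to infinity. For a weak automaton an accepting run eventually stays in `F`: once an accepting
state `q` recurs, every later state lies on a cycle through `q`, hence in its strongly connected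
component. So `𝒜` accepts iff its run is eventually in `F`, and this passes to the sampled run;
conversely, if the sampled run is infinitely often in `F`, so is the run of `𝒜`.
-/

open Filter

namespace DBA

variable {A Q : Type} (M : DBA A Q)

theorem run_add (w : ℕ → A) (m l : ℕ) :
    M.run w (m + l) = M.deltaStar (M.run w m) ((List.range' m l).map w) := by
  induction l generalizing m with
  | zero => rfl
  | succ l ih =>
    rw [← Nat.add_assoc, Nat.add_right_comm, ih, List.range'_succ]
    rfl

theorem reach_run {w : ℕ → A} {m n : ℕ} (hmn : m < n) : M.Reach (M.run w m) (M.run w n) := by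
  refine ⟨(List.range' m (n - m)).map w, by simp; omega, ?_⟩
  rw [← run_add, Nat.add_sub_cancel' hmn.le]

theorem accepts_iff_frequently [Finite Q] (w : ℕ → A) :
    M.Accepts w ↔ ∃ᶠ n in atTop, M.run w n ∈ M.F := by
  simp only [Accepts, ← frequently_atTop]
  constructor
  · rintro ⟨q, hq, h⟩
    exact h.mono fun n hn => hn ▸ hq
  · intro h
    obtain ⟨q, hq⟩ := frequently_exists.1
      (h.mono fun n hn => (⟨⟨_, hn⟩, rfl⟩ : ∃ q : M.F, M.run w n = q))
    exact ⟨q, q.2, hq⟩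

theorem Weak.eventually_mem_F {M : DBA A Q} (hM : M.Weak) {w : ℕ → A} (h : M.Accepts w) :
    ∀ᶠ n in atTop, M.run w n ∈ M.F := by
  obtain ⟨q, hq, hinf⟩ := h
  obtain ⟨N, -, hN⟩ := hinf 0
  refine eventually_atTop.2 ⟨N, fun n hn => ?_⟩
  rcases hn.eq_or_lt with rfl | hNn
  · exact hN ▸ hq
  obtain ⟨m, hm, hmq⟩ := hinf (n + 1)
  exact hM q hq _ (hN ▸ M.reach_run hNn) (hmq ▸ M.reach_run hm)

theorem Weak.accepts_iff_of_run_eq [Finite Q] {M : DBA A Q} (hM : M.Weak) {B : Type}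
    (N : DBA B Q) (hF : N.F = M.F) {v : ℕ → B} {w : ℕ → A} {p : ℕ → ℕ}
    (hp : Tendsto p atTop atTop) (hrun : ∀ n, N.run v n = M.run w (p n)) :
    M.Accepts w ↔ N.Accepts v := by
  simp only [N.accepts_iff_frequently, hF, hrun]
  refine ⟨fun h => (hp.eventually (hM.eventually_mem_F h)).frequently, fun h => ?_⟩
  exact (M.accepts_iff_frequently w).2 (hp.frequently h)

end DBA

section Parallelization

variable {b d : ℕ}

theorem parDBA_delta {Q : Type} (M : DBA (Option (Fin b)) Q) (q : Q) (x : Option (Fin d → Fin b)) :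
    (parDBA d M).delta q x = M.deltaStar q (parBlock x) := by
  cases x <;> rfl

theorem length_parBlock_pos (hd : 0 < d) (x : Option (Fin d → Fin b)) :
    0 < (parBlock x).length := by
  cases x <;> simp [parBlock, hd]

/-- `w = seq(v)`, the block of the letter `v n` occupying the positions from `p n` on. -/
def IsSeqAlong (v : ℕ → Option (Fin d → Fin b)) (w : ℕ → Option (Fin b)) (p : ℕ → ℕ) : Prop :=
  p 0 = 0 ∧ ∀ n, p (n + 1) = p n + (parBlock (v n)).length ∧
    (List.range' (p n) (parBlock (v n)).length).map w = parBlock (v n)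

variable {v : ℕ → Option (Fin d → Fin b)} {w : ℕ → Option (Fin b)} {p : ℕ → ℕ}

theorem IsSeqAlong.run_parDBA {Q : Type} (M : DBA (Option (Fin b)) Q) (h : IsSeqAlong v w p)
    (n : ℕ) : (parDBA d M).run v n = M.run w (p n) := by
  induction n with
  | zero => rw [h.1]; rfl
  | succ n ih =>
    obtain ⟨hp, hw⟩ := h.2 n
    rw [hp, M.run_add, hw, ← ih, ← parDBA_delta]
    rfl

theorem IsSeqAlong.tendsto (hd : 0 < d) (h : IsSeqAlong v w p) : Tendsto p atTop atTop :=
  (strictMono_nat_of_lt_succ fun n => by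
    rw [(h.2 n).1]; exact Nat.lt_add_of_pos_right (length_parBlock_pos hd _)).tendsto_atTop

theorem IsSeqAlong.accepts_iff {Q : Type} [Finite Q] (hd : 0 < d) {M : DBA (Option (Fin b)) Q}
    (hM : M.Weak) (h : IsSeqAlong v w p) : M.Accepts w ↔ (parDBA d M).Accepts v :=
  hM.accepts_iff_of_run_eq (parDBA d M) rfl (h.tendsto hd) (h.run_parDBA M)

end Parallelization

section Encoding

variable {α : Type}

theorem cat_map_some_of_lt (x : List α) (y : ℕ → α) {n : ℕ} (h : n < x.length) :
    cat (x.map some ++ [none]) (fun n => some (y n)) n = some x[n] := by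
  simp [cat, h, Nat.lt_succ_of_lt h]

theorem cat_map_some_of_length_eq (x : List α) (y : ℕ → α) {n : ℕ} (h : x.length = n) :
    cat (x.map some ++ [none]) (fun n => some (y n)) n = none := by
  simp [cat, ← h]

theorem cat_map_some_of_length_eq_add (x : List α) (y : ℕ → α) {n : ℕ} (h : x.length = n)
    (m : ℕ) : cat (x.map some ++ [none]) (fun n => some (y n)) (n + 1 + m) = some (y m) := by
  subst h
  have hout : ¬ x.length + 1 + m < (x.map some ++ [none]).length := by simp; omega
  rw [cat, dif_neg hout]
  simp

def chunks (d k : ℕ) (u : List α) (hlen : u.length = d * k) : List (Fin d → α) :=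
  List.ofFn fun j : Fin k => fun i : Fin d => u[d * (j : ℕ) + (i : ℕ)]'(by
    linarith [Nat.add_mul_lt_mul_of_lt_of_lt i.isLt j.isLt])

theorem length_chunks (d k : ℕ) (u : List α) (hlen : u.length = d * k) :
    (chunks d k u hlen).length = k :=
  List.length_ofFn

theorem getElem_chunks (d k : ℕ) (u : List α) (hlen : u.length = d * k) {n : ℕ}
    (hn : n < (chunks d k u hlen).length) (i : Fin d) :
    (chunks d k u hlen)[n] i = u[d * n + (i : ℕ)]'(by
      rw [length_chunks] at hn
      linarith [Nat.add_mul_lt_mul_of_lt_of_lt i.isLt hn]) :=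
  congrFun (List.getElem_ofFn hn) i

end Encoding

theorem isSeqAlong_encWord_chunks {b d : ℕ} (u : List (Fin b)) (k : ℕ) (hlen : u.length = d * k)
    (w' : ℕ → Fin b) :
    IsSeqAlong (encWord (chunks d k u hlen) fun n i => w' (d * n + (i : ℕ)))
      (cat (u.map some ++ [none]) fun n => some (w' n))
      (fun n => if n ≤ k then d * n else d * (n - 1) + 1) := by
  refine ⟨by simp, fun n => ?_⟩
  dsimp only
  rcases lt_trichotomy n k with hn | rfl | hn
  · have hnc : n < (chunks d k u hlen).length := by rw [length_chunks]; exact hn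
    rw [encWord, cat_map_some_of_lt _ _ hnc, if_pos hn.le, if_pos (show n + 1 ≤ k from hn)]
    refine ⟨by simp [parBlock, Nat.mul_succ], List.ext_getElem (by simp [parBlock]) fun i _ h => ?_⟩
    simp only [parBlock, List.length_ofFn] at h
    have hi : d * n + i < u.length := by
      rw [hlen]; linarith [Nat.add_mul_lt_mul_of_lt_of_lt h hn]
    simp [parBlock, getElem_chunks, cat_map_some_of_lt _ _ hi]
  · rw [encWord, cat_map_some_of_length_eq _ _ (length_chunks _ _ _ _), if_pos le_rfl,
      if_neg (by omega)]
    simp [parBlock, cat_map_some_of_length_eq _ _ hlen]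
  · obtain ⟨m, rfl⟩ : ∃ m, n = k + 1 + m := ⟨n - (k + 1), by omega⟩
    rw [encWord, cat_map_some_of_length_eq_add _ _ (length_chunks _ _ _ _), if_neg (by omega),
      if_neg (by omega)]
    refine ⟨by simp [parBlock]; ring, List.ext_getElem (by simp [parBlock]) fun i _ _ => ?_⟩
    simp only [parBlock, List.getElem_map, List.getElem_range', List.getElem_ofFn]
    rw [show d * (k + 1 + m - 1) + 1 + 1 * i = d * k + 1 + (d * m + i) by
        rw [show k + 1 + m - 1 = k + m by omega]; ring,
      cat_map_some_of_length_eq_add _ _ hlen]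

/-- `𝒜` accepts `u⋆w'` (with `|u|` a multiple of `d`) iff `par(𝒜)`
accepts `par(u⋆w')`. -/
theorem stmt2 {Q : Type} [Fintype Q] {b d : ℕ} (hd : 0 < d)
    (M : DBA (Option (Fin b)) Q) (hweak : M.Weak)
    (u : List (Fin b)) (k : ℕ) (hlen : u.length = d * k) (w' : ℕ → Fin b) :
    M.Accepts (cat (u.map some ++ [none]) (fun n => some (w' n))) ↔
      (parDBA d M).Accepts
        (encWord
          (List.ofFn fun j : Fin k => fun i : Fin d =>
            u.get ⟨d * (j : ℕ) + (i : ℕ), by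
              have hj := j.isLt; have hi := i.isLt
              calc d * (j : ℕ) + (i : ℕ) < d * (j : ℕ) + d := by omega
                _ = d * ((j : ℕ) + 1) := by ring
                _ ≤ d * k := Nat.mul_le_mul_left d hj
                _ = u.length := hlen.symm⟩)
          (fun n => fun i : Fin d => w' (d * n + (i : ℕ)))) :=
  (isSeqAlong_encWord_chunks u k hlen w').accepts_iff hd hweak
end

section
/- Let 𝒜 be a minimal weak deterministic Büchi automaton over the alphabet Σ^d ∪ {⋆} such that L(𝒜) ⊆ (Σ^d)^*⋆(Σ^d)^ω and δ(q₀,(0,…,0)) = q₀. Then L(𝒜) is saturated if and only if for every 0 ≤ f < d, every state q of the form δ(q₀,x) for some finite word x over Σ^d ∪ {⋆}, and every 𝐚 ∈ Σ^d with a_f ≤ b−2, the automata (𝒜^{(b−1)@f})_{δ(q,𝐚)} and (𝒜^{0@f})_{δ(q,𝐚')} accept the same language, where 𝐚' is the tuple agreeing with 𝐚 except that its f-th component is a_f + 1. -/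
/-!
Two words `𝐮⋆𝐰` and `𝐮'⋆𝐰'` encoding the same vector are connected as follows. Padding the
integer parts with leading zero tuples does not change membership, because `δ(q₀, 0) = q₀`.
Then the tracks are replaced one at a time: in each track the two digit sequences denote the
same real, so they are equal or differ by a carry `…a(b-1)(b-1)… ↦ …(a+1)00…`. A carry in
track `f` turns a word `x𝐚·fix_{(b-1)@f}(y)` into `x𝐚'·fix_{0@f}(y)`, so saturation is
equivalent to invariance of `L(𝒜)` under such carry steps, that is, to the language equality
of `𝒜^{(b-1)@f}` started after `x𝐚` and `𝒜^{0@f}` started after `x𝐚'`.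
-/
open Real

section Digits

variable {b : ℕ}

lemma fracVal_eq_ofDigits (w : ℕ → Fin b) : fracVal b w = ofDigits w := by
  unfold fracVal ofDigits ofDigitsTerm
  congr 1 with i
  rw [show -(i : ℤ) - 1 = -((i + 1 : ℕ) : ℤ) by push_cast; ring, zpow_neg, zpow_natCast]

lemma ofDigits_eq_zero_iff (s : ℕ → Fin b) : ofDigits s = 0 ↔ ∀ i, (s i : ℕ) = 0 := by
  have hb : (b : ℝ) ≠ 0 := by exact_mod_cast (Fin.pos (s 0)).ne'
  rw [ofDigits, ← summable_ofDigitsTerm.hasSum_iff,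
    hasSum_zero_iff_of_nonneg fun _ => ofDigitsTerm_nonneg, funext_iff]
  simp [ofDigitsTerm, hb]

lemma ofDigits_add_ofDigits_rev (hb : 1 < b) (s : ℕ → Fin b) :
    ofDigits s + ofDigits (fun i => (s i).rev) = 1 := by
  rw [← ofDigits_const_last_eq_one' hb, ofDigits, ofDigits, ofDigits,
    ← summable_ofDigitsTerm.tsum_add summable_ofDigitsTerm]
  congr 1 with i
  rw [ofDigitsTerm, ofDigitsTerm, ofDigitsTerm, ← add_mul]
  congr 1
  exact_mod_cast (by rw [Fin.val_rev]; omega : (s i : ℕ) + (s i).rev = b - 1)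

lemma ofDigits_eq_one_iff (hb : 1 < b) (s : ℕ → Fin b) :
    ofDigits s = 1 ↔ ∀ i, (s i : ℕ) = b - 1 := by
  have h := ofDigits_add_ofDigits_rev hb s
  rw [show ofDigits s = 1 ↔ ofDigits (fun i => (s i).rev) = 0 by
    constructor <;> intro <;> linarith, ofDigits_eq_zero_iff]
  refine forall_congr' fun i => ?_
  rw [Fin.val_rev]
  omega

lemma ofDigits_split (s : ℕ → Fin b) (k : ℕ) :
    ofDigits s = ∑ i ∈ Finset.range k, ofDigitsTerm s i +
      ((s k : ℕ) + ofDigits (fun i => s (i + (k + 1)))) * ((b : ℝ) ^ (k + 1))⁻¹ := by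
  rw [ofDigits_eq_sum_add_ofDigits s (k + 1), Finset.sum_range_succ, ofDigitsTerm]
  ring

/-- `s` and `s'` are the two expansions `…a(b-1)(b-1)…` and `…(a+1)00…` of one number. -/
def Carry (s s' : ℕ → Fin b) : Prop :=
  ∃ k, (∀ i < k, s i = s' i) ∧ (s' k : ℕ) = s k + 1 ∧
    ∀ i, k < i → (s i : ℕ) = b - 1 ∧ (s' i : ℕ) = 0

lemma sum_ofDigitsTerm_congr {s s' : ℕ → Fin b} {k : ℕ} (h : ∀ i < k, s i = s' i) :
    ∑ i ∈ Finset.range k, ofDigitsTerm s i = ∑ i ∈ Finset.range k, ofDigitsTerm s' i :=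
  Finset.sum_congr rfl fun i hi => by rw [ofDigitsTerm, h i (Finset.mem_range.mp hi), ofDigitsTerm]

lemma Carry.ofDigits_eq (hb : 1 < b) {s s' : ℕ → Fin b} (h : Carry s s') :
    ofDigits s = ofDigits s' := by
  obtain ⟨k, hlt, hk, hgt⟩ := h
  have htail : ofDigits (fun i => s (i + (k + 1))) = 1 :=
    (ofDigits_eq_one_iff hb _).2 fun i => (hgt _ (by omega)).1
  have htail' : ofDigits (fun i => s' (i + (k + 1))) = 0 :=
    (ofDigits_eq_zero_iff _).2 fun i => (hgt _ (by omega)).2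
  rw [ofDigits_split s k, ofDigits_split s' k, sum_ofDigitsTerm_congr hlt, htail, htail', hk]
  push_cast
  ring

lemma carry_of_ofDigits_eq (hb : 1 < b) {s s' : ℕ → Fin b} (h : ofDigits s = ofDigits s')
    {k : ℕ} (hlt : ∀ i < k, s i = s' i) (hk : s k < s' k) : Carry s s' := by
  set T := ofDigits (fun i => s (i + (k + 1)))
  set T' := ofDigits (fun i => s' (i + (k + 1)))
  have hpos : (0 : ℝ) < ((b : ℝ) ^ (k + 1))⁻¹ := by
    have : (0 : ℝ) < b := by positivity
    positivity
  rw [ofDigits_split s k, ofDigits_split s' k, sum_ofDigitsTerm_congr hlt, add_right_inj] at h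
  have heq := mul_right_cancel₀ hpos.ne' h
  have hk' : ((s k : ℕ) : ℝ) + 1 ≤ (s' k : ℕ) := by exact_mod_cast Fin.lt_def.mp hk
  have hT : T ≤ 1 := ofDigits_le_one _
  have hT' : 0 ≤ T' := ofDigits_nonneg _
  have hT1 : T = 1 := by linarith
  have hT'0 : T' = 0 := by linarith
  refine ⟨k, hlt, by exact_mod_cast (by linarith : ((s' k : ℕ) : ℝ) = (s k : ℕ) + 1),
    fun i hi => ?_⟩
  obtain ⟨j, rfl⟩ : ∃ j, i = j + (k + 1) := ⟨i - (k + 1), by omega⟩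
  exact ⟨(ofDigits_eq_one_iff hb _).1 hT1 j, (ofDigits_eq_zero_iff _).1 hT'0 j⟩

lemma ofDigits_eq_ofDigits_iff (hb : 1 < b) {s s' : ℕ → Fin b} :
    ofDigits s = ofDigits s' ↔ s = s' ∨ Carry s s' ∨ Carry s' s := by
  refine ⟨fun h => ?_, by rintro (rfl | h | h) <;> [rfl; exact h.ofDigits_eq hb;
    exact (h.ofDigits_eq hb).symm]⟩
  by_contra! hne
  have hex : ∃ k, s k ≠ s' k := Function.ne_iff.mp hne.1
  classical
  have hlt : ∀ i < Nat.find hex, s i = s' i := fun i hi => not_not.mp (Nat.find_min hex hi)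
  rcases (Nat.find_spec hex).lt_or_gt with hk | hk
  · exact hne.2.1 (carry_of_ofDigits_eq hb h hlt hk)
  · exact hne.2.2 (carry_of_ofDigits_eq hb h.symm (fun i hi => (hlt i hi).symm) hk)

end Digits

section Cat

variable {A : Type}

@[simp]
lemma cat_nil (w : ℕ → A) : cat [] w = w := by
  funext n
  simp [cat]

lemma cat_append (x y : List A) (w : ℕ → A) : cat (x ++ y) w = cat x (cat y w) := by
  funext n
  unfold cat
  by_cases hx : n < x.length
  · simp [hx, List.getElem_append_left, Nat.lt_add_right]
  · by_cases hy : n < x.length + y.length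
    · simp only [hx, hy, List.length_append, show n - x.length < y.length by omega, dite_true,
        dite_false, List.get_eq_getElem, List.getElem_append_right (Nat.le_of_not_lt hx)]
    · simp [hx, hy, show ¬ n - x.length < y.length by omega, Nat.sub_sub]

@[simp]
lemma cat_singleton_zero (a : A) (w : ℕ → A) : cat [a] w 0 = a := rfl

@[simp]
lemma cat_singleton_succ (a : A) (w : ℕ → A) (n : ℕ) : cat [a] w (n + 1) = w n := by
  simp [cat]

lemma cat_lt {x : List A} (w : ℕ → A) {n : ℕ} (h : n < x.length) : cat x w n = x[n] := by
  simp [cat, h]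

@[simp]
lemma cat_length_add (x : List A) (w : ℕ → A) (n : ℕ) : cat x w (x.length + n) = w n := by
  simp [cat]

lemma cat_ofFn (v : ℕ → A) (p : ℕ) :
    cat (List.ofFn fun i : Fin p => v i) (fun n => v (p + n)) = v := by
  funext n
  by_cases h : n < p
  · simp [cat, h]
  · simp only [cat, List.length_ofFn, h, dite_false]
    congr 1
    omega

lemma cat_map {B : Type} (g : A → B) (x : List A) (w : ℕ → A) :
    cat (x.map g) (fun n => g (w n)) = fun n => g (cat x w n) := by
  funext n
  by_cases h : n < x.length <;> simp [cat, h]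

end Cat

section Value

variable {b : ℕ}

lemma natVal_cons (a : Fin b) (v : List (Fin b)) :
    natVal b (a :: v) = (a : ℕ) * (b : ℝ) ^ v.length + natVal b v := by
  simp [natVal, Fin.sum_univ_succ, Nat.sub_sub, add_comm 1]

lemma ofDigits_cat_singleton (a : Fin b) (s : ℕ → Fin b) :
    ofDigits (cat [a] s) = ((a : ℕ) + ofDigits s) * (b : ℝ)⁻¹ := by
  rw [ofDigits_split _ 0]
  simp

lemma natVal_add_ofDigits (hb : 0 < b) (v : List (Fin b)) (s : ℕ → Fin b) :
    natVal b v + ofDigits s = (b : ℝ) ^ v.length * ofDigits (cat v s) := by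
  induction v with
  | nil => simp [natVal]
  | cons a v ih =>
    have : (b : ℝ) ≠ 0 := by positivity
    rw [natVal_cons, add_assoc, ih, ← List.singleton_append, cat_append, ofDigits_cat_singleton,
      List.length_append, List.length_singleton]
    field_simp
    ring

lemma vecVal_apply (hb : 0 < b) {d : ℕ} (u : List (Fin d → Fin b)) (w : ℕ → Fin d → Fin b)
    (i : Fin d) : vecVal u w i = (b : ℝ) ^ u.length * ofDigits (fun n => cat u w n i) := by
  have hcol := cat_map (fun t : Fin d → Fin b => t i) u w
  rw [vecVal, fracVal_eq_ofDigits, natVal_add_ofDigits hb, List.length_map, hcol]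

end Value

namespace DBA

variable {A Q : Type} (M : DBA A Q)

lemma deltaStar_append_singleton (q : Q) (x : List A) (a : A) :
    M.deltaStar q (x ++ [a]) = M.delta (M.deltaStar q x) a := by
  induction x generalizing q with
  | nil => rfl
  | cons c x ih => exact ih _

lemma run_add_s12 (v : ℕ → A) (k n : ℕ) :
    M.run v (k + n) = (M.start (M.run v k)).run (fun i => v (k + i)) n := by
  induction n with
  | zero => rfl
  | succ n ih => rw [← add_assoc, run, ih]; rfl

lemma accepts_iff_accepts_drop (v : ℕ → A) (k : ℕ) :
    M.Accepts v ↔ (M.start (M.run v k)).Accepts (fun i => v (k + i)) := by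
  simp only [Accepts, ← run_add_s12]
  refine exists_congr fun q => and_congr_right fun _ => ⟨fun h N => ?_, fun h N => ?_⟩
  · obtain ⟨n, hn, hq⟩ := h (k + N)
    exact ⟨n - k, by omega, by rwa [Nat.add_sub_cancel' (by omega)]⟩
  · obtain ⟨n, hn, hq⟩ := h N
    exact ⟨k + n, by omega, hq⟩

lemma run_cat_length (q : Q) (x : List A) (w : ℕ → A) :
    (M.start q).run (cat x w) x.length = M.deltaStar q x := by
  induction x generalizing q with
  | nil => rfl
  | cons a x ih =>
    rw [List.length_cons, add_comm, run_add_s12, ← List.singleton_append, cat_append]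
    simp only [add_comm 1, cat_singleton_succ]
    exact ih (M.delta q a)

lemma cat_mem_lang_iff (x : List A) (w : ℕ → A) :
    cat x w ∈ M.Lang ↔ w ∈ (M.start (M.deltaStar M.init x)).Lang := by
  change M.Accepts _ ↔ _
  rw [M.accepts_iff_accepts_drop _ x.length, ← M.run_cat_length M.init]
  simp only [cat_length_add]
  rfl

end DBA

lemma mem_lang_fixDBA_start {Q : Type} {b d : ℕ} (M : DBA (Option (Fin d → Fin b)) Q)
    (f : Fin d) (z : Fin b) (q : Q) (y : ℕ → Option ({i : Fin d // i ≠ f} → Fin b)) :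
    y ∈ ((fixDBA M f z).start q).Lang ↔ fillComp f z y ∈ (M.start q).Lang := by
  have hrun : ∀ n, ((fixDBA M f z).start q).run y n = (M.start q).run (fillComp f z y) n := by
    intro n
    induction n with
    | zero => rfl
    | succ n ih =>
      rw [DBA.run, DBA.run, ← ih, fillComp]
      cases y n <;> rfl
  simp only [DBA.Lang, DBA.Accepts, Set.mem_ofPred_eq, hrun]
  rfl

section Words

variable {b d : ℕ}

/-- Position in `𝐮⋆𝐰` of the `k`-th digit tuple when the separator sits at position `m`. -/
def posOf (m k : ℕ) : ℕ := if k < m then k else k + 1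

lemma posOf_lt_posOf_iff {m j k : ℕ} : posOf m j < posOf m k ↔ j < k := by
  unfold posOf
  split_ifs <;> omega

lemma posOf_ne (m k : ℕ) : posOf m k ≠ m := by
  unfold posOf
  split_ifs <;> omega

lemma eq_or_exists_posOf_eq (m n : ℕ) : n = m ∨ ∃ k, posOf m k = n := by
  rcases lt_trichotomy n m with h | h | h
  · exact Or.inr ⟨n, if_pos h⟩
  · exact Or.inl h
  · exact Or.inr ⟨n - 1, by unfold posOf; split_ifs <;> omega⟩

lemma encWord_eq_cat (u : List (Fin d → Fin b)) (w : ℕ → Fin d → Fin b) :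
    encWord u w = cat (u.map some) (cat [none] fun n => some (w n)) := by
  rw [encWord, cat_append]

lemma encWord_length (u : List (Fin d → Fin b)) (w : ℕ → Fin d → Fin b) :
    encWord u w u.length = none := by
  simpa [encWord_eq_cat] using cat_length_add (u.map some) (cat [none] fun n => some (w n)) 0

lemma encWord_posOf (u : List (Fin d → Fin b)) (w : ℕ → Fin d → Fin b) (k : ℕ) :
    encWord u w (posOf u.length k) = some (cat u w k) := by
  rw [encWord_eq_cat]
  by_cases hk : k < u.length
  · rw [posOf, if_pos hk, cat_lt _ (by simpa using hk), cat_lt _ hk, List.getElem_map]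
  · obtain ⟨j, rfl⟩ := Nat.exists_eq_add_of_le (Nat.le_of_not_lt hk)
    rw [posOf, if_neg hk, add_assoc]
    simpa using cat_length_add (u.map some) (cat [none] fun n => some (w n)) (j + 1)

lemma encWord_eq_none_iff (u : List (Fin d → Fin b)) (w : ℕ → Fin d → Fin b) (n : ℕ) :
    encWord u w n = none ↔ n = u.length := by
  rcases eq_or_exists_posOf_eq u.length n with rfl | ⟨k, rfl⟩
  · simp [encWord_length]
  · simp [encWord_posOf, posOf_ne]

lemma exists_encWord_of_eq_none_iff (V : ℕ → Option (Fin d → Fin b)) (m : ℕ)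
    (h : ∀ n, V n = none ↔ n = m) : ∃ u w, u.length = m ∧ V = encWord u w := by
  have hsome : ∀ k, (V (posOf m k)).isSome := fun k =>
    Option.isSome_iff_ne_none.2 fun h' => posOf_ne m k ((h _).1 h')
  set s : ℕ → Fin d → Fin b := fun k => (V (posOf m k)).get (hsome k)
  refine ⟨List.ofFn fun k : Fin m => s k, fun n => s (m + n), List.length_ofFn,
    funext fun n => ?_⟩
  rcases eq_or_exists_posOf_eq m n with rfl | ⟨k, rfl⟩
  · rw [(h n).2 rfl, eq_comm, encWord_eq_none_iff, List.length_ofFn]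
  · have hk := encWord_posOf (List.ofFn fun k : Fin m => s k) (fun n => s (m + n)) k
    rw [List.length_ofFn, cat_ofFn] at hk
    rw [hk, Option.some_get]

lemma encWord_ofFn_cat (u : List (Fin d → Fin b)) (w : ℕ → Fin d → Fin b) :
    encWord (List.ofFn fun k : Fin u.length => cat u w k) (fun n => cat u w (u.length + n)) =
      encWord u w := by
  simp only [cat_length_add]
  congr
  simp [cat_lt]

end Words

section CarryStep

variable {b d : ℕ}

def IncrAt (f : Fin d) (t t' : Fin d → Fin b) : Prop :=
  (t' f : ℕ) = t f + 1 ∧ ∀ i ≠ f, t i = t' i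

def WrapAt (f : Fin d) (t t' : Fin d → Fin b) : Prop :=
  (t f : ℕ) = b - 1 ∧ (t' f : ℕ) = 0 ∧ ∀ i ≠ f, t i = t' i

/-- `V'` arises from `V` by adding one to the `f`-th digit at position `p`, with the carry
absorbing a tail of `b - 1`s in the `f`-th track. -/
def CarryStep (f : Fin d) (V V' : ℕ → Option (Fin d → Fin b)) : Prop :=
  ∃ p, (∀ n < p, V n = V' n) ∧ (∃ t t', V p = some t ∧ V' p = some t' ∧ IncrAt f t t') ∧
    ∀ n, p < n → Option.Rel (WrapAt f) (V n) (V' n)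

def ColumnCarry (f : Fin d) (s s' : ℕ → Fin d → Fin b) : Prop :=
  (∀ i ≠ f, ∀ n, s n i = s' n i) ∧ Carry (fun n => s n f) (fun n => s' n f)

lemma columnCarry_iff {f : Fin d} {s s' : ℕ → Fin d → Fin b} :
    ColumnCarry f s s' ↔ ∃ k, (∀ j < k, s j = s' j) ∧ IncrAt f (s k) (s' k) ∧
      ∀ j, k < j → WrapAt f (s j) (s' j) := by
  constructor
  · rintro ⟨hoff, k, hlt, hk, hgt⟩
    refine ⟨k, fun j hj => funext fun i => ?_, ⟨hk, fun i hi => hoff i hi k⟩,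
      fun j hj => ⟨(hgt j hj).1, (hgt j hj).2, fun i hi => hoff i hi j⟩⟩
    by_cases hi : i = f
    · exact hi ▸ hlt j hj
    · exact hoff i hi j
  · rintro ⟨k, hlt, hk, hgt⟩
    refine ⟨fun i hi j => ?_, k, fun j hj => congrFun (hlt j hj) f, hk.1,
      fun j hj => ⟨(hgt j hj).1, (hgt j hj).2.1⟩⟩
    rcases lt_trichotomy j k with h | rfl | h
    · exact congrFun (hlt j h) i
    · exact hk.2 i hi
    · exact (hgt j h).2.2 i hi

lemma CarryStep.eq_none_iff {f : Fin d} {V V' : ℕ → Option (Fin d → Fin b)}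
    (h : CarryStep f V V') (n : ℕ) : V n = none ↔ V' n = none := by
  obtain ⟨p, hlt, ⟨t, t', hp, hp', -⟩, hgt⟩ := h
  rcases lt_trichotomy n p with hn | rfl | hn
  · rw [hlt n hn]
  · simp [hp, hp']
  · have := hgt n hn
    revert this
    cases V n <;> cases V' n <;> simp

lemma carryStep_encWord_iff {f : Fin d} {u u' : List (Fin d → Fin b)}
    {w w' : ℕ → Fin d → Fin b} (hlen : u'.length = u.length) :
    CarryStep f (encWord u w) (encWord u' w') ↔ ColumnCarry f (cat u w) (cat u' w') := by
  have hV' : ∀ j, encWord u' w' (posOf u.length j) = some (cat u' w' j) :=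
    fun j => hlen ▸ encWord_posOf u' w' j
  have hsep' : encWord u' w' u.length = none := hlen ▸ encWord_length u' w'
  rw [columnCarry_iff]
  constructor
  · rintro ⟨p, hlt, ⟨t, t', hp, hp', hinc⟩, hgt⟩
    obtain ⟨k, rfl⟩ : ∃ k, posOf u.length k = p := by
      refine (eq_or_exists_posOf_eq u.length p).resolve_left fun h => ?_
      simp [h, encWord_length] at hp
    rw [encWord_posOf, Option.some_inj] at hp
    rw [hV', Option.some_inj] at hp'
    refine ⟨k, fun j hj => ?_, hp ▸ hp' ▸ hinc, fun j hj => ?_⟩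
    · simpa [encWord_posOf, hV'] using hlt _ (posOf_lt_posOf_iff.2 hj)
    · simpa [encWord_posOf, hV'] using hgt _ (posOf_lt_posOf_iff.2 hj)
  · rintro ⟨k, hlt, hinc, hgt⟩
    refine ⟨posOf u.length k, fun n hn => ?_, ⟨_, _, encWord_posOf u w k, hV' k, hinc⟩,
      fun n hn => ?_⟩
    · rcases eq_or_exists_posOf_eq u.length n with rfl | ⟨j, rfl⟩
      · rw [encWord_length, hsep']
      · rw [encWord_posOf, hV', hlt j (posOf_lt_posOf_iff.1 hn)]
    · rcases eq_or_exists_posOf_eq u.length n with rfl | ⟨j, rfl⟩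
      · rw [encWord_length, hsep']
        exact Option.Rel.none
      · rw [encWord_posOf, hV']
        exact Option.Rel.some (hgt j (posOf_lt_posOf_iff.1 hn))

end CarryStep

section FixedTrack

variable {b d : ℕ}

def incrAt (f : Fin d) (a : Fin d → Fin b) (ha : (a f : ℕ) + 1 < b) : Fin d → Fin b :=
  fun i => if i = f then ⟨a f + 1, ha⟩ else a i

lemma IncrAt.exists_eq_incrAt {f : Fin d} {a a' : Fin d → Fin b} (h : IncrAt f a a') :
    ∃ ha : (a f : ℕ) + 1 < b, a' = incrAt f a ha :=
  ⟨h.1 ▸ (a' f).isLt, funext fun i => by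
    by_cases hi : i = f
    · subst hi
      simp [incrAt, ← h.1]
    · simp [incrAt, hi, h.2 i hi]⟩

lemma eq_fillComp_eraseComp {f : Fin d} (hb : 0 < b) {W W' : ℕ → Option (Fin d → Fin b)}
    (h : ∀ n, Option.Rel (WrapAt f) (W n) (W' n)) :
    W = fillComp f ⟨b - 1, by omega⟩ (eraseComp f W) ∧
      W' = fillComp f ⟨0, hb⟩ (eraseComp f W) := by
  refine ⟨funext fun n => ?_, funext fun n => ?_⟩ <;>
  · have hn := h n
    simp only [fillComp, eraseComp]
    revert hn
    cases W n <;> cases W' n <;> rintro (_ | _)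
    all_goals simp only [Option.map_none, Option.map_some, Option.some_inj]
    obtain ⟨hf, hf', hoff⟩ := ‹WrapAt f _ _›
    funext i
    by_cases hi : i = f
    · subst hi
      simp [fixTuple, Fin.ext_iff, hf, hf']
    · simp [fixTuple, hi, hoff i hi]

lemma carryStep_cat (f : Fin d) (x : List (Option (Fin d → Fin b))) (a : Fin d → Fin b)
    (ha : (a f : ℕ) + 1 < b) (y : ℕ → Option ({i : Fin d // i ≠ f} → Fin b)) :
    CarryStep f (cat (x ++ [some a]) (fillComp f ⟨b - 1, by omega⟩ y))
      (cat (x ++ [some (incrAt f a ha)]) (fillComp f ⟨0, by omega⟩ y)) := by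
  simp only [cat_append]
  refine ⟨x.length, fun n hn => by rw [cat_lt _ hn, cat_lt _ hn],
    ⟨a, incrAt f a ha, cat_length_add x _ 0, cat_length_add x _ 0,
      by simp [incrAt], fun i hi => by simp [incrAt, hi]⟩, fun n hn => ?_⟩
  obtain ⟨j, rfl⟩ := Nat.exists_eq_add_of_lt hn
  rw [add_assoc, cat_length_add, cat_length_add, cat_singleton_succ, cat_singleton_succ,
    fillComp, fillComp]
  cases y j with
  | none => exact Option.Rel.none
  | some t =>
    exact Option.Rel.some
      ⟨by simp [fixTuple], by simp [fixTuple], fun i hi => by simp [fixTuple, hi]⟩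

lemma CarryStep.exists_cat {f : Fin d} {V V' : ℕ → Option (Fin d → Fin b)}
    (h : CarryStep f V V') :
    ∃ x a y, ∃ ha : (a f : ℕ) + 1 < b,
      V = cat (x ++ [some a]) (fillComp f ⟨b - 1, by omega⟩ y) ∧
      V' = cat (x ++ [some (incrAt f a ha)]) (fillComp f ⟨0, by omega⟩ y) := by
  obtain ⟨p, hlt, ⟨a, a', hp, hp', hinc⟩, hgt⟩ := h
  obtain ⟨ha, rfl⟩ := IncrAt.exists_eq_incrAt hinc
  obtain ⟨htail, htail'⟩ := eq_fillComp_eraseComp (f := f) (by omega)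
    (W := fun n => V (p + 1 + n)) (W' := fun n => V' (p + 1 + n)) fun n => hgt _ (by omega)
  have hsplit : ∀ W : ℕ → Option (Fin d → Fin b),
      List.ofFn (fun n : Fin (p + 1) => W n) = List.ofFn (fun n : Fin p => W n) ++ [W p] :=
    fun W => by rw [List.ofFn_succ_last]; simp only [Fin.val_castSucc, Fin.val_last]
  have hpre : List.ofFn (fun n : Fin p => V n) = List.ofFn (fun n : Fin p => V' n) :=
    congrArg List.ofFn (funext fun n => hlt n n.isLt)
  refine ⟨List.ofFn fun n : Fin p => V n, a, eraseComp f fun n => V (p + 1 + n), ha, ?_, ?_⟩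
  · rw [← hp, ← hsplit, ← htail, cat_ofFn]
  · rw [← hp', hpre, ← hsplit, ← htail', cat_ofFn]

def CarryClosed (L : Set (ℕ → Option (Fin d → Fin b))) : Prop :=
  ∀ f V V', CarryStep f V V' → (V ∈ L ↔ V' ∈ L)

lemma carryClosed_lang_iff_fixDBA_lang_eq {Q : Type} (M : DBA (Option (Fin d → Fin b)) Q) :
    CarryClosed M.Lang ↔ ∀ (f : Fin d) (x : List (Option (Fin d → Fin b))) (a : Fin d → Fin b)
      (ha : (a f : ℕ) + 1 < b),
      ((fixDBA M f ⟨b - 1, by omega⟩).start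
        (M.delta (M.deltaStar M.init x) (some a))).Lang =
      ((fixDBA M f ⟨0, by omega⟩).start
        (M.delta (M.deltaStar M.init x) (some (incrAt f a ha)))).Lang := by
  have key : ∀ f x c z y, y ∈ ((fixDBA M f z).start (M.delta (M.deltaStar M.init x) c)).Lang ↔
      cat (x ++ [c]) (fillComp f z y) ∈ M.Lang := by
    intro f x c z y
    rw [M.cat_mem_lang_iff, DBA.deltaStar_append_singleton, mem_lang_fixDBA_start]
  constructor
  · intro h f x a ha
    ext y
    rw [key, key]
    exact h f _ _ (carryStep_cat f x a ha y)
  · intro h f V V' hstep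
    obtain ⟨x, a, y, ha, rfl, rfl⟩ := hstep.exists_cat
    rw [← key, ← key, h f x a ha]

end FixedTrack

section Saturation

variable {b d : ℕ}

lemma vecVal_eq_vecVal_iff (hb : 0 < b) {u u' : List (Fin d → Fin b)}
    {w w' : ℕ → Fin d → Fin b} (hlen : u'.length = u.length) :
    vecVal u w = vecVal u' w' ↔
      ∀ i, ofDigits (fun n => cat u w n i) = ofDigits (fun n => cat u' w' n i) := by
  have : (b : ℝ) ^ u.length ≠ 0 := by positivity
  simp only [funext_iff, vecVal_apply hb, hlen, mul_right_inj' this]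

lemma ColumnCarry.ofDigits_eq (hb : 1 < b) {f : Fin d} {s s' : ℕ → Fin d → Fin b}
    (h : ColumnCarry f s s') (i : Fin d) :
    ofDigits (fun n => s n i) = ofDigits (fun n => s' n i) := by
  by_cases hi : i = f
  · subst hi
    exact h.2.ofDigits_eq hb
  · simp only [h.1 i hi]

lemma CarryStep.exists_encWord (hb : 1 < b) {f : Fin d} {V V' : ℕ → Option (Fin d → Fin b)}
    (h : CarryStep f V V') (hV : (∃ u w, V = encWord u w) ∨ ∃ u w, V' = encWord u w) :
    ∃ u w u' w', V = encWord u w ∧ V' = encWord u' w' ∧ vecVal u w = vecVal u' w' := by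
  obtain ⟨m, hm⟩ : ∃ m, ∀ n, V n = none ↔ n = m := by
    rcases hV with ⟨u, w, rfl⟩ | ⟨u, w, rfl⟩
    · exact ⟨u.length, encWord_eq_none_iff u w⟩
    · exact ⟨u.length, fun n => (h.eq_none_iff n).trans (encWord_eq_none_iff u w n)⟩
  obtain ⟨u, w, hu, rfl⟩ := exists_encWord_of_eq_none_iff V m hm
  obtain ⟨u', w', hu', rfl⟩ :=
    exists_encWord_of_eq_none_iff V' m fun n => (h.eq_none_iff n).symm.trans (hm n)
  have hlen : u'.length = u.length := hu'.trans hu.symm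
  exact ⟨u, w, u', w', rfl, rfl, (vecVal_eq_vecVal_iff (by omega) hlen).2
    (((carryStep_encWord_iff hlen).1 h).ofDigits_eq hb)⟩

lemma Saturated.carryClosed (hb : 1 < b) {L : Set (ℕ → Option (Fin d → Fin b))}
    (hsat : Saturated L) (hshape : ∀ V ∈ L, ∃ u w, V = encWord u w) : CarryClosed L := by
  refine fun f V V' h => ⟨fun hV => ?_, fun hV' => ?_⟩
  · obtain ⟨u, w, u', w', rfl, rfl, hval⟩ := h.exists_encWord hb (Or.inl (hshape V hV))
    exact hsat u w u' w' hval hV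
  · obtain ⟨u, w, u', w', rfl, rfl, hval⟩ := h.exists_encWord hb (Or.inr (hshape V' hV'))
    exact hsat u' w' u w hval.symm hV'

/-- Replacing the digit tracks of `s` by those of `s'` one at a time, each replacement is
trivial or a column carry, since equal values have equal or carry-related expansions. -/
lemma columnCarry_invariant_transfer (hb : 1 < b) (P : (ℕ → Fin d → Fin b) → Prop)
    (hP : ∀ f s s', ColumnCarry f s s' → (P s ↔ P s')) {s s' : ℕ → Fin d → Fin b}
    (h : ∀ i, ofDigits (fun n => s n i) = ofDigits (fun n => s' n i)) (hs : P s) : P s' := by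
  set mix : ℕ → ℕ → Fin d → Fin b := fun j n i => if (i : ℕ) < j then s' n i else s n i
  have step : ∀ j, P (mix j) → P (mix (j + 1)) := by
    intro j hj
    by_cases hjd : j < d
    · set f : Fin d := ⟨j, hjd⟩
      have hoff : ∀ i ≠ f, ∀ n, mix j n i = mix (j + 1) n i := by
        intro i hi n
        have : (i : ℕ) ≠ j := fun h => hi (Fin.ext h)
        simp only [mix]
        split_ifs <;> first | rfl | omega
      have hcol : (fun n => mix j n f) = (fun n => s n f) ∧
          (fun n => mix (j + 1) n f) = fun n => s' n f := by simp [mix, f]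
      rcases (ofDigits_eq_ofDigits_iff hb).1 (h f) with heq | hc | hc
      · convert hj using 1
        funext n i
        by_cases hi : i = f
        · subst hi
          simpa [mix, f] using congrFun heq.symm n
        · exact (hoff i hi n).symm
      · exact (hP f _ _ ⟨hoff, hcol.1 ▸ hcol.2 ▸ hc⟩).1 hj
      · exact (hP f _ _ ⟨fun i hi n => (hoff i hi n).symm, hcol.1 ▸ hcol.2 ▸ hc⟩).2 hj
    · convert hj using 1
      funext n i
      simp only [mix, show (i : ℕ) < j by omega, show (i : ℕ) < j + 1 by omega, if_true]
  have hmix : ∀ j, P (mix j) := fun j => Nat.rec (by simpa [mix] using hs) step j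
  simpa [mix] using hmix d

lemma vecVal_replicate_append {z : Fin d → Fin b} (hz : ∀ i, (z i : ℕ) = 0) (k : ℕ)
    (u : List (Fin d → Fin b)) (w : ℕ → Fin d → Fin b) :
    vecVal (List.replicate k z ++ u) w = vecVal u w := by
  induction k with
  | zero => rfl
  | succ k ih =>
    rw [← ih]
    funext i
    simp [vecVal, List.replicate_succ, natVal_cons, hz]

lemma encWord_replicate_append_mem_iff {L : Set (ℕ → Option (Fin d → Fin b))}
    {z : Fin d → Fin b} (hpad : ∀ u w, encWord (z :: u) w ∈ L ↔ encWord u w ∈ L) (k : ℕ)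
    (u : List (Fin d → Fin b)) (w : ℕ → Fin d → Fin b) :
    encWord (List.replicate k z ++ u) w ∈ L ↔ encWord u w ∈ L := by
  induction k with
  | zero => rfl
  | succ k ih => rw [List.replicate_succ, List.cons_append, hpad, ih]

lemma CarryClosed.mem_of_vecVal_eq (hb : 1 < b) {L : Set (ℕ → Option (Fin d → Fin b))}
    (hcl : CarryClosed L) {u u' : List (Fin d → Fin b)} {w w' : ℕ → Fin d → Fin b}
    (hlen : u'.length = u.length) (hval : vecVal u w = vecVal u' w') (hmem : encWord u w ∈ L) :
    encWord u' w' ∈ L := by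
  set P : (ℕ → Fin d → Fin b) → Prop := fun s =>
    encWord (List.ofFn fun k : Fin u.length => s k) (fun n => s (u.length + n)) ∈ L
  have hP : ∀ f s s', ColumnCarry f s s' → (P s ↔ P s') := fun f s s' h =>
    hcl f _ _ ((carryStep_encWord_iff (by simp)).2 (by rwa [cat_ofFn, cat_ofFn]))
  have := columnCarry_invariant_transfer hb P hP
    ((vecVal_eq_vecVal_iff (by omega) hlen).1 hval) (by simp only [P]; rwa [encWord_ofFn_cat])
  simp only [P] at this
  rwa [← hlen, encWord_ofFn_cat] at this

lemma CarryClosed.saturated (hb : 1 < b) {L : Set (ℕ → Option (Fin d → Fin b))}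
    (hcl : CarryClosed L) {z : Fin d → Fin b} (hz : ∀ i, (z i : ℕ) = 0)
    (hpad : ∀ u w, encWord (z :: u) w ∈ L ↔ encWord u w ∈ L) : Saturated L := by
  intro u w u' w' hval hmem
  rw [← encWord_replicate_append_mem_iff hpad u.length]
  refine hcl.mem_of_vecVal_eq hb (by simp [add_comm]) ?_
    ((encWord_replicate_append_mem_iff hpad u'.length u w).2 hmem)
  rwa [vecVal_replicate_append hz, vecVal_replicate_append hz]

lemma saturated_iff_carryClosed (hb : 1 < b) {L : Set (ℕ → Option (Fin d → Fin b))}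
    (hshape : ∀ V ∈ L, ∃ u w, V = encWord u w) {z : Fin d → Fin b} (hz : ∀ i, (z i : ℕ) = 0)
    (hpad : ∀ u w, encWord (z :: u) w ∈ L ↔ encWord u w ∈ L) :
    Saturated L ↔ CarryClosed L :=
  ⟨fun h => h.carryClosed hb hshape, fun h => h.saturated hb hz hpad⟩

end Saturation

lemma DBA.encWord_cons_mem_lang_iff {Q : Type} {b d : ℕ} (M : DBA (Option (Fin d → Fin b)) Q)
    {z : Fin d → Fin b} (hz : M.delta M.init (some z) = M.init) (u : List (Fin d → Fin b))
    (w : ℕ → Fin d → Fin b) : encWord (z :: u) w ∈ M.Lang ↔ encWord u w ∈ M.Lang := by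
  rw [encWord, List.map_cons, List.cons_append, ← List.singleton_append, cat_append,
    M.cat_mem_lang_iff, DBA.deltaStar, DBA.deltaStar, hz]
  rfl

/-- characterization of parallel RVAs via the automata `𝒜^{z@f}`. -/
theorem stmt12 {Q : Type} {b d : ℕ} (hb : 2 ≤ b)
    (M : DBA (Option (Fin d → Fin b)) Q)
    (hshape : ∀ x ∈ M.Lang, ∃ u w, x = encWord u w)
    (hinit : M.delta M.init (some fun _ => (⟨0, by omega⟩ : Fin b)) = M.init) :
    Saturated M.Lang ↔
      ∀ (f : Fin d) (x : List (Option (Fin d → Fin b))) (a : Fin d → Fin b)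
        (ha : (a f : ℕ) ≤ b - 2),
        ((fixDBA M f (⟨b - 1, by omega⟩ : Fin b)).start
            (M.delta (M.deltaStar M.init x) (some a))).Lang =
        ((fixDBA M f (⟨0, by omega⟩ : Fin b)).start
            (M.delta (M.deltaStar M.init x)
              (some fun i => if i = f then (⟨(a f : ℕ) + 1, by omega⟩ : Fin b) else a i))).Lang := by
  rw [saturated_iff_carryClosed (by omega) hshape (fun _ => rfl)
    (M.encWord_cons_mem_lang_iff hinit), carryClosed_lang_iff_fixDBA_lang_eq]
  exact ⟨fun h f x a ha => h f x a (by omega), fun h f x a _ => h f x a (by omega)⟩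
end
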